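/- Let G be a labelled unit interval graph on D vertices and let i < D be a vertex of G such that m_i + 1 ≤ m_{i+1}, and suppose that for some k ≥ 1 with m_i + k ≤ D the pairs (w_{m_i+1}, m_{m_i+1}) = (w_{m_i+2}, m_{m_i+2}) = ⋯ = (w_{m_i+k}, m_{m_i+k}) are all equal. For 0 ≤ j ≤ k let G_j be G together with the added edges {i, b} for m_i + 1 ≤ b ≤ m_i + j. Then for every n ∈ ℕ the sequence (X_{G_j}^{(n)})_{j=0}^{k} is an arithmetic progression in ℚ[x_1,…,x_n]; in particular, if G_0 and G_k are e-positive then so is every G_j for 0 ≤ j ≤ k. -/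

import Mathlib

open scoped Classical
noncomputable section

/-- Words of length `d` in the positive integers. -/
abbrev NCWord (d : ℕ) := Fin d → ℕ+

/-- `M_d`: coefficient functions of homogeneous degree-`d` series in
noncommuting variables. -/
abbrev Md (d : ℕ) := NCWord d → ℚ

/-- `Y_G`, the chromatic symmetric function of a labelled graph in
noncommuting variables, as an element of `M_d`. -/
def YG {d : ℕ} (G : SimpleGraph (Fin d)) : Md d :=
  fun w => if ∀ j k : Fin d, G.Adj j k → w j ≠ w k then 1 else 0

/-- Set partitions of `{0, …, d-1}`. -/
abbrev SetPtn (d : ℕ) := Finpartition (Finset.univ : Finset (Fin d))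

/-- `j` and `k` lie in a common block of `π`. -/
def sameBlock {d : ℕ} (π : SetPtn d) (j k : Fin d) : Prop :=
  ∃ B ∈ π.parts, j ∈ B ∧ k ∈ B

/-- The elementary symmetric function `e_π` in noncommuting variables. -/
def eSP {d : ℕ} (π : SetPtn d) : Md d :=
  fun w => if ∀ j k : Fin d, j ≠ k → sameBlock π j k → w j ≠ w k then 1 else 0

/-- The block of `π` containing `a`. -/
def blockOf {d : ℕ} (π : SetPtn d) (a : Fin d) : Finset (Fin d) :=
  Finset.univ.filter fun k => sameBlock π a k

/-- The type of a set partition relative to the distinguished element `a`: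
the multiset of sizes of the blocks not containing `a` (an integer partition),
together with the size of the block containing `a`. -/
def ptype {d : ℕ} (π : SetPtn d) (a : Fin d) : Multiset ℕ × ℕ :=
  ((π.parts.erase (blockOf π a)).val.map Finset.card, (blockOf π a).card)

/-- `K_d`: the span of the differences `e_{π₁} - e_{π₂}` over pairs of set
partitions of equal type (relative to the distinguished element `a`). -/
def Ksub {d : ℕ} (a : Fin d) : Submodule ℚ (Md d) :=
  Submodule.span ℚ
    {f | ∃ π₁ π₂ : SetPtn d, ptype π₁ a = ptype π₂ a ∧ f = eSP π₁ - eSP π₂}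

/-- `(e)`-positivity of a labelled graph, with distinguished vertex `a`:
`Y_G` is congruent modulo `K_d` to a nonnegative combination of `e_π`'s. -/
def IsEPosNCAt {d : ℕ} (G : SimpleGraph (Fin d)) (a : Fin d) : Prop :=
  ∃ (s : Finset (SetPtn d)) (c : SetPtn d → ℚ),
    (∀ π, 0 ≤ c π) ∧ YG G - ∑ π ∈ s, c π • eSP π ∈ Ksub a

/-- Induction `↑ : M_d → M_{d+1}`. -/
def induct {d : ℕ} (f : Md d) : Md (d + 1) :=
  fun w => if w (Fin.last d) = w ⟨d - 1, by omega⟩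
    then f (fun t => w t.castSucc) else 0

/-- Concatenation of labelled graphs: identify the last vertex of `G` with
the first vertex of `H`. -/
def concatG {p q : ℕ} (G : SimpleGraph (Fin p)) (H : SimpleGraph (Fin q)) :
    SimpleGraph (Fin (p + q - 1)) :=
  SimpleGraph.fromRel fun a b =>
    (∃ i j : Fin p, G.Adj i j ∧ (a : ℕ) = (i : ℕ) ∧ (b : ℕ) = (j : ℕ)) ∨
    (∃ i j : Fin q, H.Adj i j ∧ (a : ℕ) = (i : ℕ) + (p - 1) ∧ (b : ℕ) = (j : ℕ) + (p - 1))

/-- The reverse graph `G^r`. -/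
def revG {d : ℕ} (G : SimpleGraph (Fin d)) : SimpleGraph (Fin d) :=
  SimpleGraph.comap (fun i : Fin d => (⟨d - 1 - (i : ℕ), by have := i.isLt; omega⟩ : Fin d)) G

/-- A labelled graph: a simple graph on vertex set `{0, …, n-1}`, `n ≥ 1`. -/
structure LGraph where
  n : ℕ
  npos : 0 < n
  G : SimpleGraph (Fin n)

/-- The last vertex of a labelled graph. -/
def LGraph.last (A : LGraph) : Fin A.n := ⟨A.n - 1, by have := A.npos; omega⟩

/-- A labelled graph is `(e)`-positive (at its last vertex). -/
def LGraph.EPosNC (A : LGraph) : Prop := IsEPosNCAt A.G A.last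

/-- Concatenation, as an operation on labelled graphs. -/
def LGraph.concat (A B : LGraph) : LGraph :=
  ⟨A.n + B.n - 1, by have := A.npos; have := B.npos; omega, concatG A.G B.G⟩

/-- Reversal, as an operation on labelled graphs. -/
def LGraph.rev (A : LGraph) : LGraph := ⟨A.n, A.npos, revG A.G⟩

/-- Appendable `(e)`-positivity: `G + H` is `(e)`-positive for every
`(e)`-positive labelled graph `G`. -/
def LGraph.Appendable (H : LGraph) : Prop :=
  ∀ A : LGraph, A.EPosNC → (A.concat H).EPosNC

/-- The chromatic symmetric polynomial of `G` in `n` commuting variables. -/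
def cspoly {V : Type} [Fintype V] [DecidableEq V] (G : SimpleGraph V) (n : ℕ) :
    MvPolynomial (Fin n) ℚ :=
  ∑ κ ∈ Finset.univ.filter (fun κ : V → Fin n => ∀ u v : V, G.Adj u v → κ u ≠ κ v),
    ∏ v : V, MvPolynomial.X (κ v)

/-- `e`-positivity of a finite graph. -/
def EPos {V : Type} [Fintype V] [DecidableEq V] (G : SimpleGraph V) : Prop :=
  ∃ c : Nat.Partition (Fintype.card V) → ℚ, (∀ p, 0 ≤ c p) ∧
    ∀ n : ℕ, cspoly G n =
      ∑ p : Nat.Partition (Fintype.card V),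
        c p • (p.parts.map fun r => MvPolynomial.esymm (Fin n) ℚ r).prod

/-- Closed neighbourhood of a vertex, as a finset. -/
def closedNbhd {d : ℕ} (G : SimpleGraph (Fin d)) (i : Fin d) : Finset (Fin d) :=
  Finset.univ.filter fun k => k = i ∨ G.Adj i k

/-- `m_i`: the largest label in the closed neighbourhood of `i`. -/
def mIdx {d : ℕ} (G : SimpleGraph (Fin d)) (i : Fin d) : Fin d :=
  (closedNbhd G i).max' ⟨i, by simp [closedNbhd]⟩

/-- `w_i`: the smallest label in the closed neighbourhood of `i`. -/
def wIdx {d : ℕ} (G : SimpleGraph (Fin d)) (i : Fin d) : Fin d :=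
  (closedNbhd G i).min' ⟨i, by simp [closedNbhd]⟩

/-- Labelled unit interval graph. -/
def IsUnitInterval {d : ℕ} (G : SimpleGraph (Fin d)) : Prop :=
  ∀ i v w j : Fin d, i ≤ v → v < w → w ≤ j → G.Adj i j → G.Adj v w

/-- An acyclic orientation of a graph, as an asymmetric relation with
irreflexive transitive closure whose symmetrization matches adjacency. -/
def IsAcyclicOrientation {V : Type} (G : SimpleGraph V) (r : V → V → Prop) : Prop :=
  (∀ a b, r a b → ¬ r b a) ∧
  (∀ a b, a ≠ b → ((r a b ∨ r b a) ↔ G.Adj a b)) ∧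
  Irreflexive (Relation.TransGen r)

/-- The set of sinks of an orientation. -/
def sinkSet {V : Type} [Fintype V] (r : V → V → Prop) : Finset V :=
  Finset.univ.filter fun x => ∀ y, ¬ r x y

/-- The labelled path `P_d`. -/
def PathG (d : ℕ) : SimpleGraph (Fin d) :=
  SimpleGraph.fromRel fun a b => (b : ℕ) = (a : ℕ) + 1

/-- The labelled cycle `C_d`. -/
def CycleG (d : ℕ) : SimpleGraph (Fin d) :=
  SimpleGraph.fromRel fun a b => (b : ℕ) = (a : ℕ) + 1 ∨ ((a : ℕ) = 0 ∧ (b : ℕ) = d - 1)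

/-- The graph obtained from `G` by adding the edges `{i, b}` for
`M + 1 ≤ b ≤ M + j` (0-indexed labels). -/
def addFanEdges {D : ℕ} (G : SimpleGraph (Fin D)) (i : Fin D) (M j : ℕ) :
    SimpleGraph (Fin D) :=
  SimpleGraph.fromRel fun a b =>
    G.Adj a b ∨ (a = i ∧ M + 1 ≤ (b : ℕ) ∧ (b : ℕ) ≤ M + j)

/-!
Write `G_j` for the fan graphs and `b_t = m_i + t`. Deletion–contraction along the edge
`{i, b_{j+1}}` gives `X_{G_j} - X_{G_{j+1}} = X_{G_j / i b_{j+1}}`. The vertices `b_t` all have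
the closed neighbourhood `[w, m]`, so they are pairwise adjacent closed twins. Hence a colouring
that gives `i` the colour of `b_{j+1}` already separates `i` from `b_1, …, b_j`, so the contraction
term is computed in `G` itself; and the transposition of `b_1` and `b_{j+1}` is an automorphism of
`G` fixing `i`, so that term does not depend on `j`. Finally, each term of an arithmetic
progression is a convex combination of its endpoints, and e-positivity is preserved by
nonnegative combinations.
-/

namespace SimpleGraph

variable {d : ℕ} {G : SimpleGraph (Fin d)}

lemma mem_closedNbhd {v u : Fin d} : u ∈ closedNbhd G v ↔ u = v ∨ G.Adj v u := by
  simp [closedNbhd]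

lemma adj_of_closedNbhd_eq {u v : Fin d} (h : closedNbhd G u = closedNbhd G v) (huv : u ≠ v) :
    G.Adj u v := by
  have hv : v ∈ closedNbhd G u := h ▸ mem_closedNbhd.2 (Or.inl rfl)
  exact (mem_closedNbhd.1 hv).resolve_left huv.symm

def swapIsoOfClosedNbhdEq {u v : Fin d} (h : closedNbhd G u = closedNbhd G v) : G ≃g G where
  toEquiv := Equiv.swap u v
  map_rel_iff' := by
    intro x y
    have hN : ∀ x, (x = u ∨ G.Adj u x) ↔ (x = v ∨ G.Adj v x) := fun x => by
      rw [← mem_closedNbhd, ← mem_closedNbhd, h]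
    simp only [Equiv.swap_apply_def]
    split_ifs <;> subst_vars <;> grind [SimpleGraph.Adj.symm, SimpleGraph.irrefl]

end SimpleGraph

namespace IsUnitInterval

variable {d : ℕ} {G : SimpleGraph (Fin d)}

lemma closedNbhd_eq_Icc (hG : IsUnitInterval G) (v : Fin d) :
    closedNbhd G v = Finset.Icc (wIdx G v) (mIdx G v) := by
  ext u
  rw [Finset.mem_Icc]
  refine ⟨fun hu => ⟨Finset.min'_le _ _ hu, Finset.le_max' _ _ hu⟩, fun ⟨hwu, hum⟩ => ?_⟩
  rw [SimpleGraph.mem_closedNbhd]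
  rcases lt_trichotomy u v with huv | rfl | hvu
  · have hw : wIdx G v ∈ closedNbhd G v := Finset.min'_mem _ _
    rcases SimpleGraph.mem_closedNbhd.1 hw with hw | hw
    · exact absurd (hw ▸ hwu) (not_le.2 huv)
    · exact Or.inr (hG _ u v v hwu huv le_rfl hw.symm).symm
  · exact Or.inl rfl
  · have hm : mIdx G v ∈ closedNbhd G v := Finset.max'_mem _ _
    rcases SimpleGraph.mem_closedNbhd.1 hm with hm | hm
    · exact absurd (hm ▸ hum) (not_le.2 hvu)
    · exact Or.inr (hG v v u _ le_rfl hvu hum hm)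

end IsUnitInterval

section Colourings

lemma forall_sup_edge_adj_ne_iff {V α : Type*} (H : SimpleGraph V) {a c : V} (hac : a ≠ c)
    (κ : V → α) :
    (∀ u v, (H ⊔ SimpleGraph.edge a c).Adj u v → κ u ≠ κ v) ↔
      (∀ u v, H.Adj u v → κ u ≠ κ v) ∧ κ a ≠ κ c := by
  simp only [SimpleGraph.sup_adj, SimpleGraph.edge_adj]
  refine ⟨fun h => ⟨fun u v huv => h u v (Or.inl huv), h a c (Or.inr ⟨Or.inl ⟨rfl, rfl⟩, hac⟩)⟩,
    ?_⟩
  rintro ⟨hH, hac'⟩ u v (huv | ⟨⟨rfl, rfl⟩ | ⟨rfl, rfl⟩, -⟩)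
  exacts [hH u v huv, hac', hac'.symm]

variable {V W : Type} [Fintype V] [DecidableEq V] [Fintype W] [DecidableEq W]

/-- The chromatic symmetric polynomial of `H` with `a` and `b` identified. -/
def cspolyMerged (H : SimpleGraph V) (a b : V) (n : ℕ) : MvPolynomial (Fin n) ℚ :=
  ∑ κ ∈ Finset.univ.filter
      (fun κ : V → Fin n => (∀ u v : V, H.Adj u v → κ u ≠ κ v) ∧ κ a = κ b),
    ∏ v : V, MvPolynomial.X (κ v)

lemma cspoly_eq_cspoly_sup_edge_add (H : SimpleGraph V) {a b : V} (hab : a ≠ b) (n : ℕ) :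
    cspoly H n = cspoly (H ⊔ SimpleGraph.edge a b) n + cspolyMerged H a b n := by
  rw [cspoly, cspoly, cspolyMerged,
    ← Finset.sum_filter_not_add_sum_filter _ (fun κ : V → Fin n => κ a = κ b),
    Finset.filter_filter, Finset.filter_filter]
  simp only [forall_sup_edge_adj_ne_iff H hab]

lemma cspolyMerged_sup_edge_of_adj (H : SimpleGraph V) {a b c : V} (hac : a ≠ c)
    (hbc : H.Adj b c) (n : ℕ) :
    cspolyMerged (H ⊔ SimpleGraph.edge a c) a b n = cspolyMerged H a b n := by
  unfold cspolyMerged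
  congr 1
  ext κ
  simp only [Finset.mem_filter, Finset.mem_univ, true_and, forall_sup_edge_adj_ne_iff H hac]
  exact ⟨fun ⟨⟨hH, _⟩, hab⟩ => ⟨hH, hab⟩,
    fun ⟨hH, hab⟩ => ⟨⟨hH, hab ▸ hH b c hbc⟩, hab⟩⟩

lemma cspolyMerged_iso {H : SimpleGraph V} {H' : SimpleGraph W} (σ : H ≃g H') (a b : V)
    (n : ℕ) : cspolyMerged H' (σ a) (σ b) n = cspolyMerged H a b n := by
  refine Finset.sum_equiv (σ.toEquiv.symm.arrowCongr (Equiv.refl (Fin n))) (fun κ => ?_)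
    fun κ _ => ?_
  · simp only [Finset.mem_filter, Finset.mem_univ, true_and, Equiv.arrowCongr_apply,
      Equiv.symm_symm, Equiv.coe_refl, Function.comp_apply, id, RelIso.coe_fn_toEquiv]
    rw [σ.surjective.forall₂]
    simp only [σ.map_adj_iff]
  · exact (σ.toEquiv.prod_comp fun w => MvPolynomial.X (κ w)).symm

end Colourings

lemma cspolyMerged_eq_of_closedNbhd_eq {d : ℕ} {G : SimpleGraph (Fin d)} {a u v : Fin d}
    (hu : a ≠ u) (hv : a ≠ v) (h : closedNbhd G u = closedNbhd G v) (n : ℕ) :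
    cspolyMerged G a u n = cspolyMerged G a v n := by
  have := cspolyMerged_iso (SimpleGraph.swapIsoOfClosedNbhdEq h) a u n
  simpa [SimpleGraph.swapIsoOfClosedNbhdEq, Equiv.swap_apply_of_ne_of_ne hu hv] using this.symm

section FanEdges

variable {D : ℕ} (G : SimpleGraph (Fin D)) (i : Fin D) (M : ℕ)

lemma addFanEdges_zero : addFanEdges G i M 0 = G := by
  ext a b
  simp only [addFanEdges, SimpleGraph.fromRel_adj, add_zero]
  grind [SimpleGraph.Adj.ne, SimpleGraph.Adj.symm]

lemma le_addFanEdges (j : ℕ) : G ≤ addFanEdges G i M j := fun _ _ h =>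
  (SimpleGraph.fromRel_adj _ _ _).2 ⟨h.ne, Or.inl (Or.inl h)⟩

lemma addFanEdges_succ (j : ℕ) (h : M + j + 1 < D) :
    addFanEdges G i M (j + 1) = addFanEdges G i M j ⊔ SimpleGraph.edge i ⟨M + j + 1, h⟩ := by
  ext a b
  simp only [addFanEdges, SimpleGraph.sup_adj, SimpleGraph.fromRel_adj, SimpleGraph.edge_adj,
    Fin.ext_iff]
  grind

variable {G i M}

lemma cspolyMerged_addFanEdges (hiM : (i : ℕ) ≤ M) {j : ℕ} (hjD : M + j < D) {b : Fin D}
    (hadj : ∀ c : Fin D, M < c → c ≤ M + j → G.Adj b c) (n : ℕ) :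
    cspolyMerged (addFanEdges G i M j) i b n = cspolyMerged G i b n := by
  induction j with
  | zero => rw [addFanEdges_zero]
  | succ j ih =>
    have hic : i ≠ ⟨M + j + 1, hjD⟩ := Fin.ne_of_val_ne (by simp only; omega)
    rw [addFanEdges_succ G i M j hjD, cspolyMerged_sup_edge_of_adj _ hic
      (le_addFanEdges G i M j (hadj _ (by simp only; omega) (by simp only; omega))),
      ih (by omega) fun c hc hcj => hadj c hc (by omega)]

lemma cspoly_addFanEdges_sub_succ (hiM : (i : ℕ) ≤ M) {j : ℕ} (hjD : M + j + 1 < D)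
    (hadj : ∀ c : Fin D, M < c → c ≤ M + j → G.Adj ⟨M + j + 1, hjD⟩ c) (n : ℕ) :
    cspoly (addFanEdges G i M j) n - cspoly (addFanEdges G i M (j + 1)) n =
      cspolyMerged G i ⟨M + j + 1, hjD⟩ n := by
  have hib : i ≠ ⟨M + j + 1, hjD⟩ := Fin.ne_of_val_ne (by simp only; omega)
  rw [addFanEdges_succ G i M j hjD, cspoly_eq_cspoly_sup_edge_add _ hib, add_sub_cancel_left,
    cspolyMerged_addFanEdges hiM (by omega) hadj]

theorem cspoly_addFanEdges_succ_sub (hiM : (i : ℕ) ≤ M) {k : ℕ} (hkD : M + k < D)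
    (htwin : ∀ c c' : Fin D, M < c → c ≤ M + k → M < c' → c' ≤ M + k →
      closedNbhd G c = closedNbhd G c')
    (n j : ℕ) (hj : j + 1 ≤ k) :
    cspoly (addFanEdges G i M (j + 1)) n - cspoly (addFanEdges G i M j) n =
      cspoly (addFanEdges G i M 1) n - cspoly (addFanEdges G i M 0) n := by
  have hsub : ∀ j, j + 1 ≤ k → cspoly (addFanEdges G i M j) n -
      cspoly (addFanEdges G i M (j + 1)) n = cspolyMerged G i ⟨M + 1, by omega⟩ n := by
    intro j hj
    have hb : M < M + j + 1 ∧ M + j + 1 ≤ M + k := by omega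
    rw [cspoly_addFanEdges_sub_succ hiM (by omega) fun c hc hcj =>
      SimpleGraph.adj_of_closedNbhd_eq (htwin _ c hb.1 hb.2 hc (by omega))
        (Fin.ne_of_val_ne (by simp only; omega))]
    exact cspolyMerged_eq_of_closedNbhd_eq (Fin.ne_of_val_ne (by simp only; omega))
      (Fin.ne_of_val_ne (by simp only; omega)) (htwin _ _ hb.1 hb.2 (by simp only; omega)
        (by simp only; omega)) n
  rw [← neg_sub, hsub j hj, ← hsub 0 (by omega), neg_sub]

end FanEdges

lemma eq_smul_add_smul_of_sub_succ_eq {E : Type*} [AddCommGroup E] [Module ℚ E] {f : ℕ → E}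
    {k : ℕ} (hf : ∀ j, j + 1 ≤ k → f (j + 1) - f j = f 1 - f 0) {j : ℕ} (hj : j ≤ k) :
    f j = (1 - (j / k : ℚ)) • f 0 + (j / k : ℚ) • f k := by
  have hlin : ∀ j ≤ k, f j = f 0 + (j : ℚ) • (f 1 - f 0) := by
    intro j hj
    induction j with
    | zero => simp
    | succ j ih =>
      rw [← sub_add_cancel (f (j + 1)) (f j), hf j hj, ih (by omega)]
      push_cast
      rw [add_smul, one_smul]
      abel
  rcases Nat.eq_zero_or_pos k with rfl | hk
  · obtain rfl : j = 0 := by omega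
    simp
  · rw [hlin j hj, hlin k le_rfl, smul_add, smul_smul, div_mul_cancel₀ _ (by positivity),
      ← add_assoc, ← add_smul, sub_add_cancel, one_smul]

lemma EPos.of_cspoly_eq_smul_add_smul {V : Type} [Fintype V] [DecidableEq V]
    {H H₀ H₁ : SimpleGraph V} (h₀ : EPos H₀) (h₁ : EPos H₁) {a b : ℚ} (ha : 0 ≤ a) (hb : 0 ≤ b)
    (h : ∀ n, cspoly H n = a • cspoly H₀ n + b • cspoly H₁ n) : EPos H := by
  obtain ⟨c₀, hc₀, he₀⟩ := h₀
  obtain ⟨c₁, hc₁, he₁⟩ := h₁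
  refine ⟨a • c₀ + b • c₁, fun p => add_nonneg (mul_nonneg ha (hc₀ p)) (mul_nonneg hb (hc₁ p)),
    fun n => ?_⟩
  rw [h n, he₀ n, he₁ n, Finset.smul_sum, Finset.smul_sum, ← Finset.sum_add_distrib]
  simp only [Pi.add_apply, Pi.smul_apply, smul_eq_mul, add_smul, mul_smul]

theorem stmt1 (D : ℕ) (G : SimpleGraph (Fin D))
    (hG : IsUnitInterval G)
    (i : Fin D)
    (k : ℕ) (hk1 : 1 ≤ k) (hkD : (mIdx G i : ℕ) + k < D)
    (hpairs : ∀ (t : ℕ) (ht1 : 1 ≤ t) (htk : t ≤ k),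
      wIdx G ⟨(mIdx G i : ℕ) + t, by omega⟩ = wIdx G ⟨(mIdx G i : ℕ) + 1, by omega⟩ ∧
      mIdx G ⟨(mIdx G i : ℕ) + t, by omega⟩ = mIdx G ⟨(mIdx G i : ℕ) + 1, by omega⟩) :
    (∀ n j : ℕ, j + 1 ≤ k →
      cspoly (addFanEdges G i (mIdx G i : ℕ) (j + 1)) n -
          cspoly (addFanEdges G i (mIdx G i : ℕ) j) n =
        cspoly (addFanEdges G i (mIdx G i : ℕ) 1) n -
          cspoly (addFanEdges G i (mIdx G i : ℕ) 0) n) ∧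
    (EPos (addFanEdges G i (mIdx G i : ℕ) 0) → EPos (addFanEdges G i (mIdx G i : ℕ) k) →
      ∀ j ≤ k, EPos (addFanEdges G i (mIdx G i : ℕ) j)) := by
  set M : ℕ := (mIdx G i : ℕ)
  have hnbhd : ∀ c : Fin D, M < c → c ≤ M + k →
      closedNbhd G c = closedNbhd G ⟨M + 1, by omega⟩ := by
    intro c hc hck
    obtain ⟨hw, hm⟩ := hpairs (c - M) (by omega) (by omega)
    have hc' : (⟨M + (c - M), by omega⟩ : Fin D) = c := Fin.ext (by simp only; omega)
    rw [hc'] at hw hm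
    rw [hG.closedNbhd_eq_Icc, hG.closedNbhd_eq_Icc, hw, hm]
  have hAP := cspoly_addFanEdges_succ_sub (Finset.le_max' _ i (G.mem_closedNbhd.2 (Or.inl rfl)))
    hkD fun c c' hc hck hc' hck' => (hnbhd c hc hck).trans (hnbhd c' hc' hck').symm
  refine ⟨hAP, fun h₀ hk j hj => h₀.of_cspoly_eq_smul_add_smul hk ?_ (by positivity)
    fun n => eq_smul_add_smul_of_sub_succ_eq (f := fun j => cspoly (addFanEdges G i M j) n)
      (hAP n) hj⟩
  rw [sub_nonneg]
  exact div_le_one_of_le₀ (by exact_mod_cast hj) (by positivity)
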